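/- Let G be a finite bipartite graph with bipartition (X, Y) and let ℓ be a nonnegative integer. If |𝔅_ℓ(G)| > ℓ² + ℓ, then G contains a matching of size ℓ + 1. -/

import Mathlib

/-!
Take a maximum matching `M` and suppose `|M| ≤ ℓ`. As `X` and `Y` are independent, `M` covers
at most `ℓ` vertices on each side. A selected vertex missed by `M` has, by maximality, only
covered neighbours, so its degree is at most `ℓ`; it is therefore selected because of an
`ℓ`-unimportant covered neighbour in `Y`. There are at most `ℓ` such neighbours, with at most
`ℓ²` neighbours altogether, so `|𝔅_ℓ(G)| ≤ ℓ + ℓ²`.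
-/

/-- A digraph (given by its arc relation) is semi-complete if it is simple (no loops;
multiple arcs are impossible in this encoding) and any two distinct vertices are
joined by an arc in at least one direction. -/
def SemiComplete {V : Type*} (E : V → V → Prop) : Prop :=
  (∀ v, ¬ E v v) ∧ ∀ v w : V, v ≠ w → E v w ∨ E w v

/-- The outdegree of a vertex: the number of its outneighbours. -/
noncomputable def outdeg {V : Type*} (E : V → V → Prop) (v : V) : ℕ :=
  {w | E v w}.ncard

/-- A directed path, encoded as a nonempty list of pairwise distinct vertices in which
consecutive vertices are joined by arcs. -/
def IsDipath {V : Type*} (E : V → V → Prop) (p : List V) : Prop :=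
  p ≠ [] ∧ p.Nodup ∧ p.Chain' E

/-- A directed path from `v` to `w`. -/
def PathFrom {V : Type*} (E : V → V → Prop) (v w : V) (p : List V) : Prop :=
  IsDipath E p ∧ p.head? = some v ∧ p.getLast? = some w

/-- The length of a path (its number of arcs). -/
def pathLen {V : Type*} (p : List V) : ℕ := p.length - 1

/-- The internal vertices of a path: all vertices except the first and the last one. -/
def internals {V : Type*} (p : List V) : List V := (p.drop 1).dropLast

/-- The arcs of a path. -/
def arcsOf {V : Type*} (p : List V) : List (V × V) := p.zip (p.drop 1)

/-- A `(k,d)`-short jungle: a set `X` of at least `k` vertices such that for every ordered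
pair of distinct vertices `v, w ∈ X` there are `k` pairwise distinct paths from `v` to `w`,
each of length at most `d`, that are pairwise internally vertex-disjoint. -/
def ShortJungle {V : Type*} (E : V → V → Prop) (k d : ℕ) (X : Set V) : Prop :=
  k ≤ X.ncard ∧ ∀ v ∈ X, ∀ w ∈ X, v ≠ w →
    ∃ P : Fin k → List V, Function.Injective P ∧
      (∀ i, PathFrom E v w (P i) ∧ pathLen (P i) ≤ d) ∧
      (∀ i j, i ≠ j → ∀ z ∈ internals (P i), z ∉ internals (P j))

/-- A `(k,d)`-short immersion jungle: as a short jungle, but with the `k` paths required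
to be pairwise arc-disjoint instead of internally vertex-disjoint. -/
def ShortImmersionJungle {V : Type*} (E : V → V → Prop) (k d : ℕ) (X : Set V) : Prop :=
  k ≤ X.ncard ∧ ∀ v ∈ X, ∀ w ∈ X, v ≠ w →
    ∃ P : Fin k → List V, Function.Injective P ∧
      (∀ i, PathFrom E v w (P i) ∧ pathLen (P i) ≤ d) ∧
      (∀ i j, i ≠ j → ∀ a ∈ arcsOf (P i), a ∉ arcsOf (P j))

/-- `H` (arc relation `Eh`) is topologically contained in `G` (arc relation `Eg`):
there is an injective map `η` on vertices and, for every arc `(u,v)` of `H`, a directed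
path in `G` from `η u` to `η v`, these paths being pairwise internally vertex-disjoint
with no internal vertex in the image of `η`. -/
def TopContain {W V : Type*} (Eh : W → W → Prop) (Eg : V → V → Prop) : Prop :=
  ∃ (η : W → V) (P : W → W → List V), Function.Injective η ∧
    (∀ u v : W, Eh u v → PathFrom Eg (η u) (η v) (P u v)) ∧
    (∀ u v : W, Eh u v → ∀ z ∈ internals (P u v), z ∉ Set.range η) ∧
    (∀ u v u' v' : W, Eh u v → Eh u' v' → (u, v) ≠ (u', v') →
      ∀ z ∈ internals (P u v), z ∉ internals (P u' v'))

/-- `H` (arc relation `Eh`) is immersed in `G` (arc relation `Eg`): there is an injective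
map `η` on vertices and, for every arc `(u,v)` of `H`, a directed path in `G` from `η u`
to `η v`, these paths being pairwise arc-disjoint. -/
def Immerses {W V : Type*} (Eh : W → W → Prop) (Eg : V → V → Prop) : Prop :=
  ∃ (η : W → V) (P : W → W → List V), Function.Injective η ∧
    (∀ u v : W, Eh u v → PathFrom Eg (η u) (η v) (P u v)) ∧
    (∀ u v u' v' : W, Eh u v → Eh u' v' → (u, v) ≠ (u', v') →
      ∀ a ∈ arcsOf (P u v), a ∉ arcsOf (P u' v'))

/-- A path decomposition of the digraph with arc relation `E`, with bags `Bs 0, …, Bs (r-1)`. -/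
def IsPathDecomp {V : Type*} {r : ℕ} (E : V → V → Prop) (Bs : Fin r → Set V) : Prop :=
  (⋃ i, Bs i) = Set.univ ∧
  (∀ i j l : Fin r, i < j → j < l → Bs i ∩ Bs l ⊆ Bs j) ∧
  (∀ u v : V, E u v →
    (∃ i, u ∈ Bs i ∧ v ∈ Bs i) ∨ ∃ i j : Fin r, j < i ∧ u ∈ Bs i ∧ v ∈ Bs j)

/-- The pathwidth of a digraph: the least `p` admitting a path decomposition all of whose
bags have size at most `p + 1`. -/
noncomputable def pathwidth {V : Type*} (E : V → V → Prop) : ℕ :=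
  sInf {p | ∃ (r : ℕ) (Bs : Fin r → Set V), IsPathDecomp E Bs ∧ ∀ i, (Bs i).ncard - 1 ≤ p}

/-- A separation of a digraph: a pair `(A,B)` covering all vertices with no arc from
`A \ B` to `B \ A`. -/
def IsSeparation {V : Type*} (E : V → V → Prop) (A B : Set V) : Prop :=
  A ∪ B = Set.univ ∧ ∀ v ∈ A \ B, ∀ w ∈ B \ A, ¬ E v w

/-- A separation chain `((A 0, B 0), …, (A r, B r))`. -/
def IsSepChain {V : Type*} {r : ℕ} (E : V → V → Prop) (A B : Fin (r + 1) → Set V) : Prop :=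
  A 0 = ∅ ∧ B 0 = Set.univ ∧ A (Fin.last r) = Set.univ ∧ B (Fin.last r) = ∅ ∧
  (∀ i, IsSeparation E (A i) (B i)) ∧
  (∀ i j : Fin (r + 1), i ≤ j → A i ⊆ A j ∧ B j ⊆ B i)

/-- A `(k,ℓ)`-degree tangle: at least `k` vertices whose outdegrees pairwise differ
by at most `ℓ`. -/
def DegreeTangle {V : Type*} (E : V → V → Prop) (k ℓ : ℕ) (X : Set V) : Prop :=
  k ≤ X.ncard ∧ ∀ v ∈ X, ∀ w ∈ X, outdeg E v ≤ outdeg E w + ℓ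

/-- A `(k,ℓ)`-matching tangle: disjoint sets `X`, `Y` of size `k` with a matching from `X`
to `Y`, where every vertex of `Y` has outdegree more than `ℓ` larger than every vertex
of `X`. -/
def MatchingTangle {V : Type*} (E : V → V → Prop) (k ℓ : ℕ) (X Y : Set V) : Prop :=
  Disjoint X Y ∧ X.ncard = k ∧ Y.ncard = k ∧
  (∃ f : V → V, Set.BijOn f X Y ∧ ∀ v ∈ X, E v (f v)) ∧
  (∀ v ∈ X, ∀ w ∈ Y, outdeg E v + ℓ < outdeg E w)

/-- A `k`-backward tangle: a partition `(X,Y)` of the vertex set with at least `k` arcs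
from `X` to `Y`, and every outdegree in `Y` at least every outdegree in `X`. -/
def BackwardTangle {V : Type*} (E : V → V → Prop) (k : ℕ) (X Y : Set V) : Prop :=
  X ∪ Y = Set.univ ∧ Disjoint X Y ∧
  k ≤ {p : V × V | p.1 ∈ X ∧ p.2 ∈ Y ∧ E p.1 p.2}.ncard ∧
  (∀ v ∈ X, ∀ w ∈ Y, outdeg E v ≤ outdeg E w)

/-- The width of an ordering of the vertices (given as a bijection from `Fin n`):
the maximum, over prefixes, of the number of arcs leaving the prefix forward. -/
noncomputable def orderWidth {V : Type*} [Fintype V] (E : V → V → Prop)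
    (e : Fin (Fintype.card V) ≃ V) : ℕ :=
  ⨆ α : Fin (Fintype.card V + 1),
    {p : V × V | ((e.symm p.1 : ℕ) < (α : ℕ)) ∧ ¬ ((e.symm p.2 : ℕ) < (α : ℕ)) ∧
      E p.1 p.2}.ncard

/-- The cutwidth of a digraph: the minimum width over all orderings of the vertices. -/
noncomputable def cutwidth {V : Type*} [Fintype V] (E : V → V → Prop) : ℕ :=
  ⨅ e : Fin (Fintype.card V) ≃ V, orderWidth E e

/-- `(X,Y)` is a bipartition of the simple graph `G`. -/
def IsBipartition {V : Type*} (G : SimpleGraph V) (X Y : Set V) : Prop :=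
  X ∪ Y = Set.univ ∧ Disjoint X Y ∧
  ∀ u v : V, G.Adj u v → (u ∈ X ∧ v ∈ Y) ∨ (u ∈ Y ∧ v ∈ X)

/-- A matching of `G`: a set of edges of `G` that are pairwise vertex-disjoint. -/
def IsMatching {V : Type*} (G : SimpleGraph V) (M : Set (Sym2 V)) : Prop :=
  M ⊆ G.edgeSet ∧ ∀ e ∈ M, ∀ f ∈ M, e ≠ f → ∀ v : V, v ∈ e → v ∉ f

/-- A maximum matching of `G`. -/
def IsMaxMatching {V : Type*} [Fintype V] (G : SimpleGraph V) (M : Set (Sym2 V)) : Prop :=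
  IsMatching G M ∧ ∀ N : Set (Sym2 V), IsMatching G N → N.ncard ≤ M.ncard

/-- A vertex is covered by a matching if it is an endpoint of one of its edges. -/
def CoveredBy {V : Type*} (M : Set (Sym2 V)) (v : V) : Prop := ∃ e ∈ M, v ∈ e

/-- A vertex is covered by every maximum matching of `G`. -/
def CoveredByAllMax {V : Type*} [Fintype V] (G : SimpleGraph V) (v : V) : Prop :=
  ∀ M : Set (Sym2 V), IsMaxMatching G M → CoveredBy M v

/-- Deletion of the vertex `w` from a simple graph (keeping the vertex type). -/
def deleteVert {V : Type*} (G : SimpleGraph V) (w : V) : SimpleGraph V where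
  Adj x y := G.Adj x y ∧ x ≠ w ∧ y ≠ w
  symm := ⟨fun _ _ h => ⟨h.1.symm, h.2.2, h.2.1⟩⟩
  loopless := ⟨fun x h => G.loopless.irrefl x h.1⟩

/-- An `M`-alternating path from `u` to `v`: a (possibly trivial) path starting at `u` and
ending at `v` whose edges alternate between non-matching and matching edges, beginning
with a non-matching edge. -/
def AltPathFrom {V : Type*} (G : SimpleGraph V) (M : Set (Sym2 V)) (u v : V) : Prop :=
  ∃ p : List V, p ≠ [] ∧ p.Nodup ∧ p.Chain' G.Adj ∧
    p.head? = some u ∧ p.getLast? = some v ∧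
    ∀ i : ℕ, (h : i + 1 < p.length) →
      (s(p.get ⟨i, Nat.lt_of_succ_lt h⟩, p.get ⟨i + 1, h⟩) ∈ M ↔ i % 2 = 1)

lemma Set.Finite.ncard_biUnion_le_mul {ι α : Type*} {t : Set ι} (ht : t.Finite)
    {s : ι → Set α} {n : ℕ} (hs : ∀ i ∈ t, (s i).ncard ≤ n) :
    (⋃ i ∈ t, s i).ncard ≤ t.ncard * n := by
  calc (⋃ i ∈ t, s i).ncard ≤ ∑ i ∈ ht.toFinset, (s i).ncard := by
        simpa using ht.toFinset.set_ncard_biUnion_le s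
    _ ≤ t.ncard * n := by
        simpa [Set.ncard_eq_toFinset_card t ht] using
          Finset.sum_le_card_nsmul ht.toFinset _ n (by simpa using hs)

section Matchings

variable {V : Type*} {G : SimpleGraph V} {X Y : Set V}

namespace IsBipartition

lemma not_adj_left (hB : IsBipartition G X Y) {u v : V} (hu : u ∈ X) (hv : v ∈ X) :
    ¬ G.Adj u v := by
  intro huv
  rcases hB.2.2 u v huv with ⟨-, hv'⟩ | ⟨hu', -⟩
  · exact Set.disjoint_left.mp hB.2.1 hv hv'
  · exact Set.disjoint_left.mp hB.2.1 hu hu'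

lemma not_adj_right (hB : IsBipartition G X Y) {u v : V} (hu : u ∈ Y) (hv : v ∈ Y) :
    ¬ G.Adj u v := by
  intro huv
  rcases hB.2.2 u v huv with ⟨hu', -⟩ | ⟨-, hv'⟩
  · exact Set.disjoint_left.mp hB.2.1 hu' hu
  · exact Set.disjoint_left.mp hB.2.1 hv' hv

lemma mem_right_of_adj (hB : IsBipartition G X Y) {u v : V} (hu : u ∈ X) (huv : G.Adj u v) :
    v ∈ Y := by
  rcases hB.2.2 u v huv with ⟨-, hv⟩ | ⟨hu', -⟩
  · exact hv
  · exact absurd hu (Set.disjoint_right.mp hB.2.1 hu')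

end IsBipartition

namespace IsMatching

variable {M N : Set (Sym2 V)}

lemma mono (hM : IsMatching G M) (hNM : N ⊆ M) : IsMatching G N :=
  ⟨hNM.trans hM.1, fun e he f hf => hM.2 e (hNM he) f (hNM hf)⟩

lemma exists_ncard_eq (hM : IsMatching G M) {k : ℕ} (hk : k ≤ M.ncard) :
    ∃ N, IsMatching G N ∧ N.ncard = k := by
  obtain ⟨N, hNM, hN⟩ := Set.exists_subset_card_eq hk
  exact ⟨N, hM.mono hNM, hN⟩

lemma insert_of_not_coveredBy (hM : IsMatching G M) {u v : V} (huv : G.Adj u v)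
    (hu : ¬ CoveredBy M u) (hv : ¬ CoveredBy M v) : IsMatching G (insert s(u, v) M) := by
  have uncovered : ∀ e ∈ M, ∀ w ∈ s(u, v), w ∉ e := by
    rintro e he w hw hwe
    rcases Sym2.mem_iff.mp hw with rfl | rfl
    exacts [hu ⟨e, he, hwe⟩, hv ⟨e, he, hwe⟩]
  refine ⟨Set.insert_subset huv hM.1, ?_⟩
  rintro e (rfl | he) f (rfl | hf) hef w hwe hwf
  · exact hef rfl
  · exact uncovered f hf w hwe hwf
  · exact uncovered e he w hwf hwe
  · exact hM.2 e he f hf hef w hwe hwf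

lemma ncard_coveredBy_le [Finite V] (hM : IsMatching G M) {S : Set V}
    (hS : ∀ u ∈ S, ∀ v ∈ S, ¬ G.Adj u v) : {v ∈ S | CoveredBy M v}.ncard ≤ M.ncard := by
  obtain hempty | ⟨v₀, -⟩ := {v ∈ S | CoveredBy M v}.eq_empty_or_nonempty
  · simp [hempty]
  have : Nonempty (Sym2 V) := ⟨s(v₀, v₀)⟩
  have hcov : ∀ v ∈ {v ∈ S | CoveredBy M v}, ∃ e ∈ M, v ∈ e := fun v hv => hv.2
  choose! edge hedge using hcov
  refine Set.ncard_le_ncard_of_injOn edge (fun v hv => (hedge v hv).1) ?_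
  intro u hu v hv huv
  by_contra hne
  have he : edge u = s(u, v) :=
    (Sym2.mem_and_mem_iff hne).mp ⟨(hedge u hu).2, huv ▸ (hedge v hv).2⟩
  exact hS u hu.1 v hv.1 (G.mem_edgeSet.mp (he ▸ hM.1 (hedge u hu).1))

end IsMatching

lemma exists_isMaxMatching [Fintype V] (G : SimpleGraph V) : ∃ M, IsMaxMatching G M := by
  obtain ⟨M, hM, hmax⟩ := Set.Finite.exists_maximalFor Set.ncard
    {M : Set (Sym2 V) | IsMatching G M} (Set.toFinite _) ⟨∅, by simp [IsMatching]⟩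
  exact ⟨M, hM, fun N hN => (le_total N.ncard M.ncard).elim id fun h => (hmax hN h).ge⟩

lemma IsMaxMatching.coveredBy_or_coveredBy [Fintype V] {M : Set (Sym2 V)}
    (hM : IsMaxMatching G M) {u v : V} (huv : G.Adj u v) : CoveredBy M u ∨ CoveredBy M v := by
  by_contra! h
  have hnew : s(u, v) ∉ M := fun he => h.1 ⟨_, he, Sym2.mem_mk_left u v⟩
  have := hM.2 _ (hM.1.insert_of_not_coveredBy huv h.1 h.2)
  rw [Set.ncard_insert_of_notMem hnew] at this
  omega

def bussSelector (G : SimpleGraph V) (X : Set V) (ℓ : ℕ) : Set V :=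
  {v : V | v ∈ X ∧ (ℓ < (G.neighborSet v).ncard ∨
    ∃ u ∈ G.neighborSet v, (G.neighborSet u).ncard ≤ ℓ)}

lemma bussSelector_subset [Fintype V] (hB : IsBipartition G X Y) {M : Set (Sym2 V)}
    (hM : IsMaxMatching G M) {ℓ : ℕ} (hMℓ : M.ncard ≤ ℓ) :
    bussSelector G X ℓ ⊆ {v ∈ X | CoveredBy M v} ∪
      ⋃ u ∈ {u ∈ Y | CoveredBy M u ∧ (G.neighborSet u).ncard ≤ ℓ}, G.neighborSet u := by
  rintro v ⟨hvX, hv⟩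
  by_cases hcov : CoveredBy M v
  · exact Or.inl ⟨hvX, hcov⟩
  right
  have hnbr : G.neighborSet v ⊆ {u ∈ Y | CoveredBy M u} := fun u hu =>
    ⟨hB.mem_right_of_adj hvX hu, (hM.coveredBy_or_coveredBy hu).resolve_left hcov⟩
  have hdeg : (G.neighborSet v).ncard ≤ ℓ :=
    ((Set.ncard_le_ncard hnbr).trans (hM.1.ncard_coveredBy_le fun _ hu _ hw =>
      hB.not_adj_right hu hw)).trans hMℓ
  obtain ⟨u, hu, hudeg⟩ := hv.resolve_left (not_lt.mpr hdeg)
  exact Set.mem_biUnion ⟨(hnbr hu).1, (hnbr hu).2, hudeg⟩ (G.mem_neighborSet _ _ |>.mpr hu.symm)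

lemma ncard_bussSelector_le [Fintype V] (hB : IsBipartition G X Y) {M : Set (Sym2 V)}
    (hM : IsMaxMatching G M) {ℓ : ℕ} (hMℓ : M.ncard ≤ ℓ) :
    (bussSelector G X ℓ).ncard ≤ ℓ ^ 2 + ℓ := by
  have hX : {v ∈ X | CoveredBy M v}.ncard ≤ ℓ :=
    (hM.1.ncard_coveredBy_le fun _ hu _ hw => hB.not_adj_left hu hw).trans hMℓ
  have hY : {u ∈ Y | CoveredBy M u ∧ (G.neighborSet u).ncard ≤ ℓ}.ncard ≤ ℓ :=
    ((Set.ncard_le_ncard (t := {u ∈ Y | CoveredBy M u}) fun u hu => ⟨hu.1, hu.2.1⟩).trans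
      (hM.1.ncard_coveredBy_le fun _ hu _ hw => hB.not_adj_right hu hw)).trans hMℓ
  calc (bussSelector G X ℓ).ncard
      ≤ {v ∈ X | CoveredBy M v}.ncard + (⋃ u ∈ {u ∈ Y | CoveredBy M u ∧
          (G.neighborSet u).ncard ≤ ℓ}, G.neighborSet u).ncard :=
        (Set.ncard_le_ncard (bussSelector_subset hB hM hMℓ)).trans (Set.ncard_union_le _ _)
    _ ≤ ℓ + ℓ * ℓ := by
        gcongr
        exact ((Set.toFinite _).ncard_biUnion_le_mul fun u hu => hu.2.2).trans
          (Nat.mul_le_mul_right ℓ hY)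
    _ = ℓ ^ 2 + ℓ := by ring

end Matchings

/-- If the Buss selector `𝔅_ℓ(G)` (vertices of `X` that are `ℓ`-important
or have an `ℓ`-unimportant neighbour) has more than `ℓ² + ℓ` elements, then `G` contains
a matching of size `ℓ + 1`. -/
theorem stmt_17 {V : Type*} [Fintype V] (G : SimpleGraph V) (X Y : Set V)
    (hB : IsBipartition G X Y) (ℓ : ℕ)
    (h : ℓ ^ 2 + ℓ <
      {v : V | v ∈ X ∧ (ℓ < (G.neighborSet v).ncard ∨
        ∃ u ∈ G.neighborSet v, (G.neighborSet u).ncard ≤ ℓ)}.ncard) :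
    ∃ M : Set (Sym2 V), IsMatching G M ∧ M.ncard = ℓ + 1 := by
  change ℓ ^ 2 + ℓ < (bussSelector G X ℓ).ncard at h
  obtain ⟨M, hM⟩ := exists_isMaxMatching G
  have hMℓ : ℓ < M.ncard := by
    by_contra! hle
    exact (ncard_bussSelector_le hB hM hle).not_gt h
  exact hM.1.exists_ncard_eq hMℓ
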